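/- Let D be a connected vertex transitive digraph on at least 2 vertices with directed diameter d and circumference ℓ. Then the cycle graph C(D) is a connected graph whose diameter is at least d/ℓ − 1. -/

import Mathlib

/-!
Since the directed diameter is finite, `D` is strongly connected. Hence every arc `u → v` lies
on a directed cycle (close a shortest path `v ⇝ u` with it), and as every vertex has an
out-neighbour, every vertex lies on a cycle. Consecutive arcs of a directed walk lie on cycles
sharing a vertex, so `C(D)` is connected. Conversely, a path `C₀, …, Cₖ` in `C(D)` from a cycle
through `u` to a cycle through `v` gives a directed walk from `u` to `v` of length at most
`(k + 1) ℓ`: go round each `Cᵢ` to a vertex it shares with `Cᵢ₊₁`. So `d ≤ (diam C(D) + 1) ℓ`.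
-/

/-- A digraph is vertex transitive if for any two vertices `u, v` there is an
automorphism of the digraph mapping `u` to `v`. -/
def Digraph.IsVertexTransitive {V : Type*} (D : Digraph V) : Prop :=
  ∀ u v : V, ∃ e : V ≃ V, (∀ x y, D.Adj (e x) (e y) ↔ D.Adj x y) ∧ e u = v

/-- The underlying undirected (simple) graph of a digraph. -/
def Digraph.underlying {V : Type*} (D : Digraph V) : SimpleGraph V where
  Adj x y := x ≠ y ∧ (D.Adj x y ∨ D.Adj y x)
  symm := ⟨fun x y h => ⟨h.1.symm, h.2.symm⟩⟩
  loopless := ⟨fun x h => h.1 rfl⟩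

/-- `D.HasDirCycleOfLen n` means that `D` contains a directed cycle of length `n`. -/
def Digraph.HasDirCycleOfLen {V : Type*} (D : Digraph V) (n : ℕ) : Prop :=
  1 ≤ n ∧ ∃ f : ZMod n → V, Function.Injective f ∧ ∀ i, D.Adj (f i) (f (i + 1))

/-- The circumference of a digraph : the length of a longest directed cycle. -/
noncomputable def Digraph.circumference {V : Type*} (D : Digraph V) : ℕ :=
  sSup {n : ℕ | D.HasDirCycleOfLen n}

/-- `D.HasDirWalkOfLen u v n` : there is a directed walk of length `n` from `u` to `v`. -/
def Digraph.HasDirWalkOfLen {V : Type*} (D : Digraph V) (u v : V) (n : ℕ) : Prop :=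
  ∃ f : Fin (n + 1) → V, f 0 = u ∧ f (Fin.last n) = v ∧
    ∀ i : Fin n, D.Adj (f i.castSucc) (f i.succ)

/-- The directed distance from `u` to `v`. -/
noncomputable def Digraph.dirDist {V : Type*} (D : Digraph V) (u v : V) : ℕ∞ :=
  sInf ((fun n : ℕ => (n : ℕ∞)) '' {n : ℕ | D.HasDirWalkOfLen u v n})

/-- The directed diameter of a digraph. -/
noncomputable def Digraph.dirDiam {V : Type*} (D : Digraph V) : ℕ∞ :=
  ⨆ u : V, ⨆ v : V, D.dirDist u v

/-- `A` is the arc set of some directed cycle of `D`. We identify a directed cycle of `D`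
with its set of arcs (which determines it up to rotation of the cyclic sequence). -/
def Digraph.IsDirCycleSet {V : Type*} (D : Digraph V) (A : Set (V × V)) : Prop :=
  ∃ n : ℕ, 1 ≤ n ∧ ∃ f : ZMod n → V, Function.Injective f ∧
    (∀ i, D.Adj (f i) (f (i + 1))) ∧ A = Set.range fun i => (f i, f (i + 1))

/-- The set of vertices of a directed cycle, given by its arc set. -/
def cycleVerts {V : Type*} (A : Set (V × V)) : Set V := Prod.fst '' A

/-- The cycle graph `C(D)` of a digraph `D` : its vertices are the directed cycles of
`D`, two of them being adjacent iff they are distinct and share at least one vertex. -/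
def Digraph.cycleGraph {V : Type*} (D : Digraph V) :
    SimpleGraph {A : Set (V × V) // D.IsDirCycleSet A} where
  Adj C₁ C₂ := C₁ ≠ C₂ ∧ (cycleVerts C₁.1 ∩ cycleVerts C₂.1).Nonempty
  symm := ⟨fun C₁ C₂ h => ⟨h.1.symm, by rw [Set.inter_comm]; exact h.2⟩⟩
  loopless := ⟨fun C h => h.1 rfl⟩

theorem cycleVerts_range {V : Type*} {n : ℕ} (f : ZMod n → V) :
    cycleVerts (Set.range fun i => (f i, f (i + 1))) = Set.range f := by
  rw [cycleVerts, ← Set.range_comp]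
  rfl

namespace Digraph

variable {V : Type*} {D : Digraph V} {u v w : V} {m n : ℕ}

theorem hasDirWalkOfLen_iff_exists_nat :
    D.HasDirWalkOfLen u v n ↔
      ∃ f : ℕ → V, f 0 = u ∧ f n = v ∧ ∀ i < n, D.Adj (f i) (f (i + 1)) := by
  constructor
  · rintro ⟨f, rfl, rfl, hf⟩
    refine ⟨fun i => f ⟨min i n, by omega⟩, ?_, ?_, fun i hi => ?_⟩
    · congr 1
    · simp [Fin.last]
    · convert hf ⟨i, hi⟩ using 2 <;> ext <;> simp <;> omega
  · rintro ⟨f, rfl, rfl, hf⟩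
    exact ⟨fun i => f i, rfl, rfl, fun i => hf i i.isLt⟩

theorem hasDirWalkOfLen_zero : D.HasDirWalkOfLen u v 0 ↔ u = v := by
  rw [hasDirWalkOfLen_iff_exists_nat]
  constructor
  · rintro ⟨f, rfl, rfl, -⟩
    rfl
  · rintro rfl
    exact ⟨fun _ => u, rfl, rfl, by simp⟩

theorem hasDirWalkOfLen_succ :
    D.HasDirWalkOfLen u v (n + 1) ↔ ∃ w, D.Adj u w ∧ D.HasDirWalkOfLen w v n := by
  simp only [hasDirWalkOfLen_iff_exists_nat]
  constructor
  · rintro ⟨f, rfl, rfl, hf⟩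
    exact ⟨f 1, hf 0 n.succ_pos, fun i => f (i + 1), rfl, rfl,
      fun i hi => hf (i + 1) (by omega)⟩
  · rintro ⟨w, huw, f, rfl, rfl, hf⟩
    refine ⟨fun i => if i = 0 then u else f (i - 1), rfl, by simp, fun i hi => ?_⟩
    rcases i with _ | i
    · simpa using huw
    · simpa using hf i (by omega)

theorem HasDirWalkOfLen.append (h₁ : D.HasDirWalkOfLen u w m) (h₂ : D.HasDirWalkOfLen w v n) :
    D.HasDirWalkOfLen u v (m + n) := by
  induction m generalizing u with
  | zero => rwa [hasDirWalkOfLen_zero.mp h₁, zero_add]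
  | succ m ih =>
    obtain ⟨x, hux, hx⟩ := hasDirWalkOfLen_succ.mp h₁
    rw [Nat.add_right_comm]
    exact hasDirWalkOfLen_succ.mpr ⟨x, hux, ih hx⟩

theorem hasDirWalkOfLen_segment {f : ℕ → V} (hf : ∀ i < n, D.Adj (f i) (f (i + 1)))
    {a b : ℕ} (hab : a ≤ b) (hbn : b ≤ n) : D.HasDirWalkOfLen (f a) (f b) (b - a) :=
  hasDirWalkOfLen_iff_exists_nat.mpr ⟨fun k => f (a + k), rfl,
    by simp only [Nat.add_sub_cancel' hab],
    fun k hk => by simpa only [← add_assoc] using hf (a + k) (by omega)⟩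

theorem HasDirWalkOfLen.exists_injOn_walk (h : D.HasDirWalkOfLen u v n) :
    ∃ m, ∃ f : ℕ → V, f 0 = u ∧ f m = v ∧ (∀ i < m, D.Adj (f i) (f (i + 1))) ∧
      Set.InjOn f (Set.Iic m) := by
  classical
  have hex : ∃ n, D.HasDirWalkOfLen u v n := ⟨n, h⟩
  obtain ⟨f, hf0, hfv, hf⟩ := hasDirWalkOfLen_iff_exists_nat.mp (Nat.find_spec hex)
  refine ⟨_, f, hf0, hfv, hf, ?_⟩
  -- a repeated vertex `f i = f j` lets us skip the closed subwalk between them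
  suffices ∀ i j, i < j → j ≤ Nat.find hex → f i ≠ f j by
    intro i hi j hj hij
    by_contra hne
    rcases Nat.lt_or_gt_of_ne hne with hlt | hlt
    · exact this i j hlt hj hij
    · exact this j i hlt hi hij.symm
  intro i j hij hj heq
  have hshort := (hasDirWalkOfLen_segment hf i.zero_le (by omega)).append
    (heq ▸ hasDirWalkOfLen_segment hf hj le_rfl)
  exact Nat.find_min hex (by omega) (hf0 ▸ hfv ▸ hshort)

theorem HasDirWalkOfLen.dirDist_le (h : D.HasDirWalkOfLen u v n) : D.dirDist u v ≤ n :=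
  sInf_le ⟨n, h, rfl⟩

def IsStronglyConnected (D : Digraph V) : Prop :=
  ∀ u v, ∃ n, D.HasDirWalkOfLen u v n

theorem isStronglyConnected_of_dirDiam_ne_top (h : D.dirDiam ≠ ⊤) : D.IsStronglyConnected := by
  intro u v
  by_contra hno
  have hdist : D.dirDist u v = ⊤ := by simp [dirDist, not_exists.mp hno]
  exact h (top_le_iff.mp (hdist ▸ le_iSup₂ (f := fun u v => D.dirDist u v) u v))

theorem exists_isDirCycleSet_of_closed_walk {f : ℕ → V} (hn : 1 ≤ n)
    (hf : ∀ i < n, D.Adj (f i) (f (i + 1))) (hclosed : f n = f 0)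
    (hinj : Set.InjOn f (Set.Iio n)) :
    ∃ A, D.IsDirCycleSet A ∧ ∀ i < n, f i ∈ cycleVerts A := by
  have : NeZero n := ⟨by omega⟩
  refine ⟨_, ⟨n, hn, fun i : ZMod n => f i.val,
    fun i j hij => ZMod.val_injective n (hinj (ZMod.val_lt i) (ZMod.val_lt j) hij),
    fun i => ?_, rfl⟩, fun i hi => ?_⟩
  · have hval : (i + 1).val = (i.val + 1) % n := by
      rw [← ZMod.val_natCast, Nat.cast_succ, ZMod.natCast_zmod_val]
    have hwrap : f ((i.val + 1) % n) = f (i.val + 1) := by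
      rcases (show i.val + 1 ≤ n from ZMod.val_lt i).lt_or_eq with hlt | heq
      · rw [Nat.mod_eq_of_lt hlt]
      · rw [heq, Nat.mod_self, hclosed]
    simpa only [hval, hwrap] using hf i.val (ZMod.val_lt i)
  · rw [cycleVerts_range]
    exact ⟨i, by simp [ZMod.val_natCast, Nat.mod_eq_of_lt hi]⟩

theorem IsStronglyConnected.exists_dirCycle_of_adj (hD : D.IsStronglyConnected)
    (huv : D.Adj u v) : ∃ A, D.IsDirCycleSet A ∧ u ∈ cycleVerts A ∧ v ∈ cycleVerts A := by
  obtain ⟨n, hn⟩ := hD v u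
  obtain ⟨m, f, hf0, hfm, hf, hinj⟩ := hn.exists_injOn_walk
  -- close the path `v ⇝ u` with the arc `u → v`
  set g := Function.update f (m + 1) v
  have hgf : Set.EqOn f g (Set.Iic m) := fun i hi => by
    simp [g, Function.update_of_ne (show i ≠ m + 1 by simp at hi; omega)]
  have hg : ∀ i < m + 1, D.Adj (g i) (g (i + 1)) := by
    intro i hi
    rcases (Nat.lt_succ_iff.mp hi).lt_or_eq with hlt | rfl
    · rw [← hgf (Set.mem_Iic.mpr hlt.le), ← hgf (Set.mem_Iic.mpr hlt)]
      exact hf i hlt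
    · simpa [g, ← hgf (Set.mem_Iic.mpr le_rfl), hfm] using huv
  obtain ⟨A, hA, hmem⟩ := exists_isDirCycleSet_of_closed_walk m.succ_pos hg
    (by simp [g, hf0]) (Set.Iio_add_one_eq_Iic m ▸ hinj.congr hgf)
  refine ⟨A, hA, ?_, ?_⟩
  · simpa [← hgf (Set.mem_Iic.mpr le_rfl), hfm] using hmem m m.lt_succ_self
  · simpa [← hgf (Set.mem_Iic.mpr m.zero_le), hf0] using hmem 0 m.succ_pos

theorem IsDirCycleSet.nonempty_cycleVerts {A : Set (V × V)} (hA : D.IsDirCycleSet A) :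
    (cycleVerts A).Nonempty := by
  obtain ⟨n, hn, f, -, -, rfl⟩ := hA
  have : NeZero n := ⟨by omega⟩
  rw [cycleVerts_range]
  exact Set.range_nonempty f

theorem IsStronglyConnected.exists_mem_cycleVerts [Nontrivial V] (hD : D.IsStronglyConnected)
    (v : V) : ∃ A, D.IsDirCycleSet A ∧ v ∈ cycleVerts A := by
  obtain ⟨w, hwv⟩ := exists_ne v
  obtain ⟨n, hn⟩ := hD v w
  cases n with
  | zero => exact absurd (hasDirWalkOfLen_zero.mp hn).symm hwv
  | succ n =>
    obtain ⟨x, hvx, -⟩ := hasDirWalkOfLen_succ.mp hn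
    obtain ⟨A, hA, hv, -⟩ := hD.exists_dirCycle_of_adj hvx
    exact ⟨A, hA, hv⟩

theorem cycleGraph_reachable_of_mem {C₁ C₂ : {A : Set (V × V) // D.IsDirCycleSet A}}
    (h₁ : v ∈ cycleVerts C₁.1) (h₂ : v ∈ cycleVerts C₂.1) : D.cycleGraph.Reachable C₁ C₂ := by
  by_cases h : C₁ = C₂
  · exact h ▸ .refl _
  · exact SimpleGraph.Adj.reachable ⟨h, v, h₁, h₂⟩

theorem IsStronglyConnected.cycleGraph_reachable (hD : D.IsStronglyConnected)
    {C₁ C₂ : {A : Set (V × V) // D.IsDirCycleSet A}} (hu : u ∈ cycleVerts C₁.1)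
    (hv : v ∈ cycleVerts C₂.1) (h : D.HasDirWalkOfLen u v n) : D.cycleGraph.Reachable C₁ C₂ := by
  induction n generalizing u C₁ with
  | zero => exact cycleGraph_reachable_of_mem hu (hasDirWalkOfLen_zero.mp h ▸ hv)
  | succ n ih =>
    obtain ⟨w, huw, hw⟩ := hasDirWalkOfLen_succ.mp h
    obtain ⟨A, hA, huA, hwA⟩ := hD.exists_dirCycle_of_adj huw
    exact (cycleGraph_reachable_of_mem (C₂ := ⟨A, hA⟩) hu huA).trans (ih hwA hw)

theorem IsStronglyConnected.cycleGraph_connected [Nontrivial V] (hD : D.IsStronglyConnected) :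
    D.cycleGraph.Connected := by
  obtain ⟨A, hA, -⟩ := hD.exists_mem_cycleVerts (Classical.arbitrary V)
  have : Nonempty {A : Set (V × V) // D.IsDirCycleSet A} := ⟨⟨A, hA⟩⟩
  refine ⟨fun C₁ C₂ => ?_⟩
  obtain ⟨u, hu⟩ := C₁.2.nonempty_cycleVerts
  obtain ⟨v, hv⟩ := C₂.2.nonempty_cycleVerts
  obtain ⟨n, h⟩ := hD u v
  exact hD.cycleGraph_reachable hu hv h

theorem HasDirCycleOfLen.le_circumference [Finite V] (h : D.HasDirCycleOfLen n) :
    n ≤ D.circumference :=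
  le_csSup ⟨Nat.card V, fun k ⟨_, f, hf, _⟩ =>
    Nat.card_zmod k ▸ Nat.card_le_card_of_injective f hf⟩ h

theorem IsDirCycleSet.exists_walk_lt_circumference [Finite V] {A : Set (V × V)}
    (hA : D.IsDirCycleSet A) (hu : u ∈ cycleVerts A) (hv : v ∈ cycleVerts A) :
    ∃ t < D.circumference, D.HasDirWalkOfLen u v t := by
  obtain ⟨n, hn, f, hinj, hadj, rfl⟩ := hA
  have : NeZero n := ⟨by omega⟩
  rw [cycleVerts_range] at hu hv
  obtain ⟨i, rfl⟩ := hu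
  obtain ⟨j, rfl⟩ := hv
  refine ⟨(j - i).val, (ZMod.val_lt _).trans_le (HasDirCycleOfLen.le_circumference
    ⟨hn, f, hinj, hadj⟩), fun k => f (i + (k : ℕ)), by simp, by simp, fun k => ?_⟩
  simpa [Fin.val_succ, add_assoc] using hadj (i + (k : ℕ))

theorem exists_walk_le_of_cycleGraph_walk [Finite V]
    {C₁ C₂ : {A : Set (V × V) // D.IsDirCycleSet A}} (p : D.cycleGraph.Walk C₁ C₂)
    (hu : u ∈ cycleVerts C₁.1) (hv : v ∈ cycleVerts C₂.1) :
    ∃ t ≤ (p.length + 1) * D.circumference, D.HasDirWalkOfLen u v t := by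
  induction p generalizing u with
  | @nil C =>
    obtain ⟨t, ht, h⟩ := C.2.exists_walk_lt_circumference hu hv
    exact ⟨t, by simpa using ht.le, h⟩
  | @cons C _ _ hadj p ih =>
    obtain ⟨w, hw₁, hw₂⟩ := hadj.2
    obtain ⟨t₁, ht₁, h₁⟩ := C.2.exists_walk_lt_circumference hu hw₁
    obtain ⟨t₂, ht₂, h₂⟩ := ih hw₂ hv
    refine ⟨t₁ + t₂, ?_, h₁.append h₂⟩
    rw [SimpleGraph.Walk.length_cons, add_mul, one_mul]
    omega

theorem IsStronglyConnected.dirDiam_le [Finite V] [Nontrivial V] (hD : D.IsStronglyConnected) :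
    D.dirDiam ≤ ((D.cycleGraph.diam + 1) * D.circumference : ℕ) := by
  have hconn := hD.cycleGraph_connected
  have := hconn.nonempty
  have hediam : D.cycleGraph.ediam ≠ ⊤ := SimpleGraph.connected_iff_ediam_ne_top.mp hconn
  refine iSup₂_le fun u v => ?_
  obtain ⟨A₁, hA₁, hu⟩ := hD.exists_mem_cycleVerts u
  obtain ⟨A₂, hA₂, hv⟩ := hD.exists_mem_cycleVerts v
  obtain ⟨p, hp⟩ := hconn.exists_walk_length_eq_dist ⟨A₁, hA₁⟩ ⟨A₂, hA₂⟩
  obtain ⟨t, ht, h⟩ := exists_walk_le_of_cycleGraph_walk p hu hv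
  have hp_le : p.length ≤ D.cycleGraph.diam := hp ▸ SimpleGraph.dist_le_diam hediam
  calc D.dirDist u v ≤ t := h.dirDist_le
    _ ≤ _ := by exact_mod_cast ht.trans (Nat.mul_le_mul_right _ (by omega))

end Digraph

theorem cycleGraph_connected_and_large_diam_general {V : Type*} [Fintype V] (D : Digraph V)
    (hcard : 2 ≤ Fintype.card V)
    (d ℓ : ℕ) (hd : D.dirDiam = (d : ℕ∞)) (hℓ : D.circumference = ℓ) :
    D.cycleGraph.Connected ∧
      (d : ℝ) / (ℓ : ℝ) - 1 ≤ (D.cycleGraph.diam : ℝ) := by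
  have : Nontrivial V := Fintype.one_lt_card_iff_nontrivial.mp hcard
  have hD : D.IsStronglyConnected :=
    Digraph.isStronglyConnected_of_dirDiam_ne_top (hd ▸ ENat.natCast_ne_top d)
  refine ⟨hD.cycleGraph_connected, ?_⟩
  have hdℓ : d ≤ (D.cycleGraph.diam + 1) * ℓ := by
    have := hD.dirDiam_le
    rwa [hd, hℓ, Nat.cast_le] at this
  rcases ℓ.eq_zero_or_pos with rfl | hℓ_pos
  · simp only [Nat.cast_zero, div_zero, zero_sub]
    linarith [(D.cycleGraph.diam).cast_nonneg (α := ℝ)]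
  · rw [sub_le_iff_le_add, div_le_iff₀ (by exact_mod_cast hℓ_pos)]
    exact_mod_cast hdℓ

/-- For a connected vertex transitive digraph `D` on at least two vertices with directed
diameter `d` and circumference `ℓ`, the cycle graph `C(D)` is connected and has diameter
at least `d/ℓ - 1`. -/
theorem cycleGraph_connected_and_large_diam {V : Type*} [Fintype V] (D : Digraph V)
    (hirr : ∀ v : V, ¬ D.Adj v v)
    (hconn : D.underlying.Connected)
    (htrans : D.IsVertexTransitive)
    (hcard : 2 ≤ Fintype.card V)
    (d ℓ : ℕ) (hd : D.dirDiam = (d : ℕ∞)) (hℓ : D.circumference = ℓ) :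
    D.cycleGraph.Connected ∧
      (d : ℝ) / (ℓ : ℝ) - 1 ≤ (D.cycleGraph.diam : ℝ) :=
  cycleGraph_connected_and_large_diam_general D hcard d ℓ hd hℓ
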